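/- Let A be a unital σ-C*-algebra, i.e. a unital pro-C*-algebra whose topology is induced by a countable family of C*-seminorms (equivalently, A is metrizable). If every element a ∈ A is spectrally bounded, i.e. sup{|λ| : λ ∈ sp_A(a)} < ∞ for all a ∈ A, then every element of A is bounded (A_b = A), ‖·‖_∞ is a C*-norm on A, and the topology of A is induced by the single norm ‖·‖_∞; that is, A is a C*-algebra. -/

import Mathlib

open scoped ENNReal

def IsCStarSeminorm {A : Type*} [Ring A] [StarRing A] [Algebra ℂ A] (p : A → ℝ) : Prop :=
  (∀ a, 0 ≤ p a) ∧ (∀ a b, p (a + b) ≤ p a + p b) ∧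
    (∀ (c : ℂ) (a : A), p (c • a) = ‖c‖ * p a) ∧
    (∀ a b, p (a * b) ≤ p a * p b) ∧ (∀ a, p (star a * a) = p a ^ 2)

def contCStarSeminorms (A : Type*) [TopologicalSpace A] [Ring A] [StarRing A] [Algebra ℂ A] :
    Set (A → ℝ) :=
  {p | IsCStarSeminorm p ∧ Continuous p}

class ProCStarAlgebra (A : Type*) [UniformSpace A] [Ring A] [StarRing A] [Algebra ℂ A] :
    Prop where
  t2 : T2Space A
  complete : CompleteSpace A
  topologicalRing : IsTopologicalRing A
  continuousStar : ContinuousStar A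
  uniformAddGroup : IsUniformAddGroup A
  mem_nhds_zero : ∀ s : Set A, s ∈ nhds (0 : A) ↔
    ∃ p ∈ contCStarSeminorms A, ∃ ε : ℝ, 0 < ε ∧ {a : A | p a < ε} ⊆ s

noncomputable def uniformNorm (A : Type*) [UniformSpace A] [Ring A] [StarRing A] [Algebra ℂ A]
    (a : A) : ℝ≥0∞ :=
  ⨆ p ∈ contCStarSeminorms A, ENNReal.ofReal (p a)

def boundedElems (A : Type*) [UniformSpace A] [Ring A] [StarRing A] [Algebra ℂ A] : Set A :=
  {a | uniformNorm A a < ⊤}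

def expSet (A : Type*) [UniformSpace A] [Ring A] [StarRing A] [Algebra ℂ A] : Set A :=
  {w | ∃ (n : ℕ) (a e : Fin n → A),
    (∀ j, star (a j) = a j) ∧
    (∀ j, HasSum (fun k : ℕ => ((Complex.I ^ k / (k.factorial : ℂ)) • a j ^ k)) (e j)) ∧
    w = (List.ofFn e).prod}

/-! A continuous C*-seminorm `p` is controlled by the spectrum: in the Banach algebra completing
`(A, p)`, the C*-identity gives `p (h ^ 2 ^ k) = p h ^ 2 ^ k` for self-adjoint `h`, so by Gelfand's
formula `p h` is the spectral radius of the image of `h`, which is at most that of `h` in `A`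
because spectra shrink under unital homomorphisms. Applied to `star a * a`, spectral boundedness
bounds all `p a` uniformly, so `‖·‖_∞` is a pointwise finite supremum of C*-seminorms, hence a
C*-seminorm; it is a norm because `A` is Hausdorff. As a supremum of continuous seminorms it is
lower semicontinuous; `A` is metrizable and complete, hence Baire and so barrelled, which makes
`‖·‖_∞` continuous, and then it induces the topology of `A`. -/

open Filter Topology UniformSpace

theorem spectralRadius_eq_nnnorm_of_nnnorm_pow_two_pow {B : Type*} [NormedRing B]
    [NormedAlgebra ℂ B] [CompleteSpace B] {x : B} (hx : ∀ k : ℕ, ‖x ^ 2 ^ k‖₊ = ‖x‖₊ ^ 2 ^ k) :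
    spectralRadius ℂ x = ‖x‖₊ := by
  refine tendsto_nhds_unique ?_ (tendsto_const_nhds (f := atTop (α := ℕ)))
  convert (spectrum.pow_nnnorm_pow_one_div_tendsto_nhds_spectralRadius x).comp
    (tendsto_pow_atTop_atTop_of_one_lt one_lt_two) using 1
  funext n
  rw [Function.comp_apply, hx n, ENNReal.coe_pow, ← ENNReal.rpow_natCast, ← ENNReal.rpow_mul]
  simp

namespace IsCStarSeminorm

variable {A : Type*} [Ring A] [StarRing A] [Algebra ℂ A] {p : A → ℝ}

theorem nonneg (hp : IsCStarSeminorm p) (a : A) : 0 ≤ p a := hp.1 a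

theorem add_le (hp : IsCStarSeminorm p) (a b : A) : p (a + b) ≤ p a + p b := hp.2.1 a b

theorem map_smul (hp : IsCStarSeminorm p) (c : ℂ) (a : A) : p (c • a) = ‖c‖ * p a := hp.2.2.1 c a

theorem mul_le (hp : IsCStarSeminorm p) (a b : A) : p (a * b) ≤ p a * p b := hp.2.2.2.1 a b

theorem star_mul_self (hp : IsCStarSeminorm p) (a : A) : p (star a * a) = p a ^ 2 :=
  hp.2.2.2.2 a

theorem iSup {ι : Sort*} {p : ι → A → ℝ} (hp : ∀ i, IsCStarSeminorm (p i))
    (hbdd : ∀ a, BddAbove (Set.range fun i => p i a)) : IsCStarSeminorm fun a => ⨆ i, p i a := by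
  have nonneg a : 0 ≤ ⨆ i, p i a := Real.iSup_nonneg fun i => (hp i).nonneg a
  have le_iSup a i : p i a ≤ ⨆ i, p i a := le_ciSup (hbdd a) i
  refine ⟨nonneg, fun a b => ?_, fun c a => ?_, fun a b => ?_, fun a => ?_⟩
  · exact Real.iSup_le (fun i => ((hp i).add_le a b).trans (add_le_add (le_iSup a i) (le_iSup b i)))
      (add_nonneg (nonneg a) (nonneg b))
  · simp only [(hp _).map_smul, Real.mul_iSup_of_nonneg (norm_nonneg c)]
  · exact Real.iSup_le (fun i => ((hp i).mul_le a b).trans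
      (mul_le_mul (le_iSup a i) (le_iSup b i) ((hp i).nonneg b) (nonneg a)))
      (mul_nonneg (nonneg a) (nonneg b))
  · simp only [(hp _).star_mul_self,
      Real.iSup_pow_of_ne_zero (fun i => (hp i).nonneg a) two_ne_zero]

theorem map_zero (hp : IsCStarSeminorm p) : p 0 = 0 := by
  simpa using hp.map_smul 0 0

theorem map_neg (hp : IsCStarSeminorm p) (a : A) : p (-a) = p a := by
  simpa using hp.map_smul (-1) a

abbrev toSeminormedRing (hp : IsCStarSeminorm p) : SeminormedRing A where
  __ := ‹Ring A›
  __ := AddGroupSeminorm.toSeminormedAddCommGroup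
    { toFun := p, map_zero' := hp.map_zero, add_le' := hp.add_le, neg' := hp.map_neg }
  norm_mul_le := hp.mul_le

theorem map_pow_two_pow (hp : IsCStarSeminorm p) {h : A} (hh : IsSelfAdjoint h) (k : ℕ) :
    p (h ^ 2 ^ k) = p h ^ 2 ^ k := by
  induction k with
  | zero => simp
  | succ k ih =>
    calc p (h ^ 2 ^ (k + 1)) = p (star (h ^ 2 ^ k) * h ^ 2 ^ k) := by
          rw [(hh.pow _).star_eq, ← sq, ← pow_mul, pow_succ]
      _ = p h ^ 2 ^ (k + 1) := by rw [hp.star_mul_self, ih, ← pow_mul, pow_succ]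

theorem le_of_forall_spectrum_norm_le (hp : IsCStarSeminorm p) {h : A} (hh : IsSelfAdjoint h)
    {M : ℝ} (hM₀ : 0 ≤ M) (hM : ∀ z ∈ spectrum ℂ h, ‖z‖ ≤ M) : p h ≤ M := by
  let := hp.toSeminormedRing
  let : NormedSpace ℂ A := ⟨fun c a => (hp.map_smul c a).le⟩
  let : NormedAlgebra ℂ (Completion A) :=
    { (inferInstance : Algebra ℂ (Completion A)) with norm_smul_le := norm_smul_le }
  let ι : A →ₐ[ℂ] Completion A := { Completion.coeRingHom with commutes' := fun _ => rfl }
  have hnorm (a : A) : ‖ι a‖ = p a := Completion.norm_coe a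
  have hpow k : ‖ι h ^ 2 ^ k‖₊ = ‖ι h‖₊ ^ 2 ^ k := by
    ext
    simp only [← map_pow, NNReal.coe_pow, coe_nnnorm, hnorm]
    exact hp.map_pow_two_pow hh k
  have hrad : spectralRadius ℂ (ι h) ≤ ENNReal.ofReal M :=
    iSup₂_le fun z hz => by
      rw [← ENNReal.ofReal_coe_nnreal, coe_nnnorm]
      exact ENNReal.ofReal_le_ofReal (hM z (AlgHom.spectrum_apply_subset ι h hz))
  rw [spectralRadius_eq_nnnorm_of_nnnorm_pow_two_pow hpow, ← ENNReal.ofReal_coe_nnreal,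
    coe_nnnorm, ENNReal.ofReal_le_ofReal_iff hM₀] at hrad
  rwa [hnorm] at hrad

end IsCStarSeminorm

theorem IsCStarSeminorm.bddAbove_range_of_spectrum_bounded {A : Type*} [Ring A] [StarRing A]
    [Algebra ℂ A] {S : Set (A → ℝ)} (hS : ∀ p ∈ S, IsCStarSeminorm p)
    (hsb : ∀ a : A, ∃ M : ℝ, ∀ z ∈ spectrum ℂ a, ‖z‖ ≤ M) (a : A) :
    BddAbove (Set.range fun p : S => (p : A → ℝ) a) := by
  obtain ⟨M, hM⟩ := hsb (star a * a)
  refine ⟨√(max M 0), Set.forall_mem_range.2 fun ⟨p, hp⟩ => ?_⟩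
  rw [Real.le_sqrt ((hS p hp).nonneg a) (le_max_right M 0), ← (hS p hp).star_mul_self]
  exact (hS p hp).le_of_forall_spectrum_norm_le (.star_mul_self a) (le_max_right M 0)
    fun z hz => (hM z hz).trans (le_max_left M 0)

theorem isCountablyGenerated_nhds_of_forall_mem_nhds_iff {X : Type*} [TopologicalSpace X] {x : X}
    {P : ℕ → X → ℝ}
    (hP : ∀ s : Set X, s ∈ 𝓝 x ↔ ∃ (n : ℕ) (ε : ℝ), 0 < ε ∧ {a : X | ∀ k ≤ n, P k a < ε} ⊆ s) :
    (𝓝 x).IsCountablyGenerated := by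
  have hbasis : (𝓝 x).HasBasis (fun _ : ℕ × ℕ => True)
      fun nm => {a : X | ∀ k ≤ nm.1, P k a < 1 / ((nm.2 : ℝ) + 1)} := by
    refine ⟨fun s => ?_⟩
    simp only [true_and, hP s]
    constructor
    · rintro ⟨n, ε, hε, hsub⟩
      obtain ⟨m, hm⟩ := exists_nat_one_div_lt hε
      exact ⟨(n, m), fun a ha => hsub fun k hk => (ha k hk).trans hm⟩
    · rintro ⟨⟨n, m⟩, hsub⟩
      exact ⟨n, 1 / ((m : ℝ) + 1), by positivity, hsub⟩
  exact hbasis.isCountablyGenerated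

section uniformNorm

variable {A : Type*} [UniformSpace A] [Ring A] [StarRing A] [Algebra ℂ A]

theorem uniformNorm_toReal (a : A) :
    (uniformNorm A a).toReal = ⨆ p : contCStarSeminorms A, (p : A → ℝ) a := by
  rw [uniformNorm, iSup_subtype', ENNReal.toReal_iSup fun _ => ENNReal.ofReal_ne_top]
  exact iSup_congr fun p => ENNReal.toReal_ofReal (p.2.1.nonneg a)

theorem uniformNorm_lt_top {a : A}
    (ha : BddAbove (Set.range fun p : contCStarSeminorms A => (p : A → ℝ) a)) :
    uniformNorm A a < ⊤ := by
  obtain ⟨C, hC⟩ := ha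
  calc uniformNorm A a ≤ ENNReal.ofReal C :=
        iSup₂_le fun p hp => ENNReal.ofReal_le_ofReal (hC ⟨⟨p, hp⟩, rfl⟩)
    _ < ⊤ := ENNReal.ofReal_lt_top

end uniformNorm

namespace ProCStarAlgebra

attribute [local instance] t2 complete topologicalRing uniformAddGroup

variable {A : Type*} [UniformSpace A] [Ring A] [StarRing A] [Algebra ℂ A] [ProCStarAlgebra A]

theorem eq_zero_of_forall_contCStarSeminorms {a : A} (ha : ∀ p ∈ contCStarSeminorms A, p a = 0) :
    a = 0 := by
  by_contra hne
  obtain ⟨p, hp, ε, hε, hsub⟩ :=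
    (mem_nhds_zero _).1 (isOpen_compl_singleton.mem_nhds (Ne.symm hne : (0 : A) ≠ a))
  exact hsub (show p a < ε by rwa [ha p hp]) rfl

theorem baireSpace [(𝓝 (0 : A)).IsCountablyGenerated] : BaireSpace A :=
  have : (uniformity A).IsCountablyGenerated := IsUniformAddGroup.uniformity_countably_generated
  BaireSpace.of_completelyPseudoMetrizable

theorem continuous_iSup_contCStarSeminorms [BaireSpace A]
    (hbdd : ∀ a : A, BddAbove (Set.range fun p : contCStarSeminorms A => (p : A → ℝ) a)) :
    Continuous fun a => ⨆ p : contCStarSeminorms A, (p : A → ℝ) a := by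
  have hR := IsCStarSeminorm.iSup (fun p : contCStarSeminorms A => p.2.1) hbdd
  exact (Seminorm.of (𝕜 := ℂ) _ hR.add_le hR.map_smul).continuous_of_lowerSemicontinuous
    (lowerSemicontinuous_ciSup hbdd fun p => p.2.2.lowerSemicontinuous)

theorem mem_nhds_zero_iff_of_continuous_iSup
    (hbdd : ∀ a : A, BddAbove (Set.range fun p : contCStarSeminorms A => (p : A → ℝ) a))
    (hcont : Continuous fun a => ⨆ p : contCStarSeminorms A, (p : A → ℝ) a) (s : Set A) :
    s ∈ 𝓝 (0 : A) ↔
      ∃ ε : ℝ, 0 < ε ∧ {a : A | ⨆ p : contCStarSeminorms A, (p : A → ℝ) a < ε} ⊆ s := by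
  constructor
  · intro hs
    obtain ⟨p, hp, ε, hε, hsub⟩ := (mem_nhds_zero s).1 hs
    exact ⟨ε, hε, fun a ha => hsub ((le_ciSup (hbdd a) ⟨p, hp⟩).trans_lt ha)⟩
  · rintro ⟨ε, hε, hsub⟩
    refine Filter.mem_of_superset ((isOpen_lt hcont continuous_const).mem_nhds ?_) hsub
    simpa [fun p : contCStarSeminorms A => p.2.1.map_zero] using hε

end ProCStarAlgebra

/-- Let `A` be a unital σ-C*-algebra, i.e. a unital pro-C*-algebra whose
topology is induced by a countable family of continuous C*-seminorms.  If every element of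
`A` is spectrally bounded, then every element of `A` is bounded (`A_b = A`), `‖·‖_∞` is a
C*-norm on `A`, and the topology of `A` is induced by this single norm; that is, `A` is a
C*-algebra. -/
theorem stmt10 {A : Type*} [UniformSpace A] [Ring A] [StarRing A] [Algebra ℂ A]
    [ProCStarAlgebra A]
    (hσ : ∃ P : ℕ → (A → ℝ), (∀ n, P n ∈ contCStarSeminorms A) ∧
      ∀ s : Set A, s ∈ nhds (0 : A) ↔
        ∃ (n : ℕ) (ε : ℝ), 0 < ε ∧ {a : A | ∀ k ≤ n, P k a < ε} ⊆ s)
    (hsb : ∀ a : A, ∃ M : ℝ, ∀ z ∈ spectrum ℂ a, ‖z‖ ≤ M) :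
    boundedElems A = Set.univ ∧
    IsCStarSeminorm (fun a : A => (uniformNorm A a).toReal) ∧
    (∀ a : A, (uniformNorm A a).toReal = 0 → a = 0) ∧
    (∀ s : Set A, s ∈ nhds (0 : A) ↔
      ∃ ε : ℝ, 0 < ε ∧ {a : A | (uniformNorm A a).toReal < ε} ⊆ s) := by
  obtain ⟨P, -, hP⟩ := hσ
  have := isCountablyGenerated_nhds_of_forall_mem_nhds_iff hP
  have := ProCStarAlgebra.baireSpace (A := A)
  have hbdd := IsCStarSeminorm.bddAbove_range_of_spectrum_bounded
    (S := contCStarSeminorms A) (fun _ hp => hp.1) hsb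
  simp only [uniformNorm_toReal]
  refine ⟨Set.eq_univ_of_forall fun a => uniformNorm_lt_top (hbdd a),
    IsCStarSeminorm.iSup (fun p => p.2.1) hbdd, fun a ha => ?_,
    ProCStarAlgebra.mem_nhds_zero_iff_of_continuous_iSup hbdd
      (ProCStarAlgebra.continuous_iSup_contCStarSeminorms hbdd)⟩
  refine ProCStarAlgebra.eq_zero_of_forall_contCStarSeminorms fun p hp =>
    le_antisymm ?_ (hp.1.nonneg a)
  exact ha ▸ le_ciSup (hbdd a) ⟨p, hp⟩
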